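/- Let P > 0 and let λ, k, γ, ν, Ĉ, D̂ be real numbers with γ ≠ 0 and λk² ≠ 0. Suppose u : ℝ → ℝ is twice continuously differentiable, periodic with period 2P, and satisfies for all θ ∈ ℝ both λk²u''(θ) = (γ/3)u(θ)³ − (ν/2)u(θ)² + Ĉ and (λk²/2)u'(θ)² = (γ/12)u(θ)⁴ − (ν/6)u(θ)³ + Ĉu(θ) + D̂. Let α₁ = ⟨u⟩ and α₂ = ⟨u²⟩. Then ⟨u²(u')²⟩ = (γ/(6λk²)) ( α₂(69Ĉν/(10γ²) − 7ν⁴/(8γ⁴) + 24D̂/(5γ)) + α₁(6νD̂/(5γ²) + 21ν²Ĉ/(10γ³)) + 35ν³Ĉ/(20γ⁴) + 7ν²D̂/(5γ³) − 54Ĉ²/(5γ²) ), where ⟨f⟩ = (1/(2P))∫₀^{2P} f(θ)dθ. -/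

import Mathlib

/-!
Multiplying the once-integrated equation by `φ(u)` and the first integral by `2φ'(u)` and
adding gives `λk² (φ(u) u')'`, whose mean over a period vanishes. Taking `φ = 1, u, u², u³`
yields linear recurrences expressing `⟨u³⟩, …, ⟨u⁶⟩` through `⟨u⟩, ⟨u²⟩`, and the first
integral multiplied by `2u²` writes `⟨u²u'²⟩` as a combination of `⟨u²⟩, ⟨u³⟩, ⟨u⁵⟩, ⟨u⁶⟩`.
-/

open Function intervalIntegral

theorem Function.Periodic.deriv {E : Type*} [NormedAddCommGroup E] [NormedSpace ℝ E]
    {f : ℝ → E} {T : ℝ} (hf : Periodic f T) : Periodic (deriv f) T := fun x => by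
  rw [← deriv_comp_add_const, show (fun x => f (x + T)) = f from funext hf]

theorem Function.Periodic.intervalIntegral_eq_zero_of_hasDerivAt {E : Type*}
    [NormedAddCommGroup E] [NormedSpace ℝ E] [CompleteSpace E] {f f' : ℝ → E} {T : ℝ}
    (hf : Periodic f T) (hderiv : ∀ x, HasDerivAt f (f' x) x) (a : ℝ)
    (hint : IntervalIntegrable f' MeasureTheory.volume a (a + T)) : ∫ x in a..a + T, f' x = 0 := by
  rw [integral_eq_sub_of_hasDerivAt (fun x _ => hderiv x) hint, hf a, sub_self]

theorem ContDiff.hasDerivAt_deriv {u : ℝ → ℝ} (hu : ContDiff ℝ 2 u) (x : ℝ) :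
    HasDerivAt (deriv u) (iteratedDeriv 2 u x) x := by
  simpa [iteratedDeriv_succ] using (hu.differentiable_iteratedDeriv' 1 x).hasDerivAt

theorem integral_deriv_comp_mul_deriv_eq_zero_of_periodic {u : ℝ → ℝ} {T : ℝ}
    (hper : Periodic u T) (hu : ContDiff ℝ 2 u) {φ φ' : ℝ → ℝ}
    (hφ : ∀ y, HasDerivAt φ (φ' y) y) (hφ' : Continuous φ') :
    ∫ x in 0..T, (φ' (u x) * deriv u x ^ 2 + φ (u x) * iteratedDeriv 2 u x) = 0 := by
  have hu₁ : Differentiable ℝ u := hu.differentiable (by norm_num)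
  have hderiv (x : ℝ) : HasDerivAt (fun x => φ (u x) * deriv u x)
      (φ' (u x) * deriv u x ^ 2 + φ (u x) * iteratedDeriv 2 u x) x := by
    refine (((hφ (u x)).comp x (hu₁ x).hasDerivAt).fun_mul (hu.hasDerivAt_deriv x)).congr_deriv ?_
    simp only [comp_apply]
    ring
  have hcont : Continuous fun x => φ' (u x) * deriv u x ^ 2 + φ (u x) * iteratedDeriv 2 u x := by
    have hu' : Continuous (deriv u) := hu.continuous_deriv (by norm_num)
    have hφc : Continuous φ := continuous_iff_continuousAt.2 fun y => (hφ y).continuousAt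
    fun_prop
  simpa using ((hper.comp φ).mul hper.deriv).intervalIntegral_eq_zero_of_hasDerivAt hderiv 0
    (hcont.intervalIntegrable _ _)

noncomputable def intervalMoment (u : ℝ → ℝ) (T : ℝ) (m : ℕ) : ℝ :=
  ∫ x in 0..T, u x ^ m

theorem integral_linear_combination_pow {u : ℝ → ℝ} (hu : Continuous u) (T c₁ c₂ c₃ c₄ : ℝ)
    (m₁ m₂ m₃ m₄ : ℕ) :
    ∫ x in 0..T, (c₁ * u x ^ m₁ + c₂ * u x ^ m₂ + c₃ * u x ^ m₃ + c₄ * u x ^ m₄)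
      = c₁ * intervalMoment u T m₁ + c₂ * intervalMoment u T m₂
        + c₃ * intervalMoment u T m₃ + c₄ * intervalMoment u T m₄ := by
  have hi (c : ℝ) (m : ℕ) : IntervalIntegrable (fun x => c * u x ^ m) MeasureTheory.volume 0 T :=
    (by fun_prop : Continuous fun x => c * u x ^ m).intervalIntegrable _ _
  rw [integral_add (((hi _ _).add (hi _ _)).add (hi _ _)) (hi _ _),
    integral_add ((hi _ _).add (hi _ _)) (hi _ _), integral_add (hi _ _) (hi _ _)]
  simp only [integral_const_mul, intervalMoment]

section SteadyGardner

variable {u : ℝ → ℝ} {T a γ ν C D : ℝ} (hu : ContDiff ℝ 2 u) (hper : Periodic u T)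
  (heq1 : ∀ θ, a * iteratedDeriv 2 u θ = (γ / 3) * u θ ^ 3 - (ν / 2) * u θ ^ 2 + C)
  (heq2 : ∀ θ, (a / 2) * deriv u θ ^ 2
    = (γ / 12) * u θ ^ 4 - (ν / 6) * u θ ^ 3 + C * u θ + D)

include heq2 in
theorem gardner_integral_sq_mul_deriv_sq (hcont : Continuous u) :
    a * ∫ x in 0..T, u x ^ 2 * deriv u x ^ 2
      = γ / 6 * intervalMoment u T 6 - ν / 3 * intervalMoment u T 5
        + 2 * C * intervalMoment u T 3 + 2 * D * intervalMoment u T 2 := by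
  calc _ = ∫ x in 0..T, a * (u x ^ 2 * deriv u x ^ 2) := (integral_const_mul _ _).symm
    _ = ∫ x in 0..T, (γ / 6 * u x ^ 6 + (-(ν / 3)) * u x ^ 5 + 2 * C * u x ^ 3
          + 2 * D * u x ^ 2) :=
        integral_congr fun x _ => by linear_combination 2 * u x ^ 2 * heq2 x
    _ = _ := by
        rw [integral_linear_combination_pow hcont]
        ring

include hu hper

include heq1 in
theorem gardner_intervalMoment_three :
    2 * γ * intervalMoment u T 3 - 3 * ν * intervalMoment u T 2
      + 6 * C * intervalMoment u T 0 = 0 := by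
  have hφ (y : ℝ) : HasDerivAt (fun _ => (1 : ℝ)) 0 y := hasDerivAt_const y 1
  calc _ = ∫ x in 0..T, (2 * γ * u x ^ 3 + (-3 * ν) * u x ^ 2 + 6 * C * u x ^ 0 + 0 * u x ^ 0) := by
        rw [integral_linear_combination_pow hu.continuous]
        ring
    _ = ∫ x in 0..T, 6 * a * (0 * deriv u x ^ 2 + 1 * iteratedDeriv 2 u x) :=
        integral_congr fun x _ => by linear_combination (-6) * heq1 x
    _ = 0 := by
        rw [integral_const_mul, integral_deriv_comp_mul_deriv_eq_zero_of_periodic hper hu hφ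
          continuous_const, mul_zero]

include heq1 heq2 in
theorem gardner_intervalMoment_recurrence (n : ℕ) :
    (n + 3) * γ * intervalMoment u T (n + 4) - (2 * n + 5) * ν * intervalMoment u T (n + 3)
      + 6 * (2 * n + 3) * C * intervalMoment u T (n + 1)
      + 12 * (n + 1) * D * intervalMoment u T n = 0 := by
  have hφ (y : ℝ) : HasDerivAt (fun y => y ^ (n + 1)) ((n + 1) * y ^ n) y := by
    simpa using hasDerivAt_pow (n + 1) y
  calc _ = ∫ x in 0..T, ((n + 3) * γ * u x ^ (n + 4) + (-(2 * n + 5) * ν) * u x ^ (n + 3)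
          + 6 * (2 * n + 3) * C * u x ^ (n + 1) + 12 * (n + 1) * D * u x ^ n) := by
        rw [integral_linear_combination_pow hu.continuous]
        ring
    _ = ∫ x in 0..T, 6 * a * ((n + 1) * u x ^ n * deriv u x ^ 2
          + u x ^ (n + 1) * iteratedDeriv 2 u x) :=
        integral_congr fun x _ => by
          linear_combination (-12 * (n + 1) * u x ^ n) * heq2 x - 6 * u x ^ (n + 1) * heq1 x
    _ = 0 := by
        rw [integral_const_mul, integral_deriv_comp_mul_deriv_eq_zero_of_periodic hper hu hφ
          (by fun_prop), mul_zero]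

end SteadyGardner

theorem gardner_mean_sq_mul_deriv_sq_of_moments {a γ ν C D T K : ℝ} {M : ℕ → ℝ}
    (hT : T ≠ 0) (hγ : γ ≠ 0) (ha : a ≠ 0) (hM₀ : M 0 = T)
    (h₃ : 2 * γ * M 3 - 3 * ν * M 2 + 6 * C * M 0 = 0)
    (hrec : ∀ n : ℕ, (n + 3) * γ * M (n + 4) - (2 * n + 5) * ν * M (n + 3)
      + 6 * (2 * n + 3) * C * M (n + 1) + 12 * (n + 1) * D * M n = 0)
    (hK : a * K = γ / 6 * M 6 - ν / 3 * M 5 + 2 * C * M 3 + 2 * D * M 2) :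
    1 / T * K
      = (γ / (6 * a)) *
          (1 / T * M 2 * (69 * C * ν / (10 * γ ^ 2) - 7 * ν ^ 4 / (8 * γ ^ 4)
                  + 24 * D / (5 * γ))
           + 1 / T * M 1 * (6 * ν * D / (5 * γ ^ 2) + 21 * ν ^ 2 * C / (10 * γ ^ 3))
           + 35 * ν ^ 3 * C / (20 * γ ^ 4) + 7 * ν ^ 2 * D / (5 * γ ^ 3)
           - 54 * C ^ 2 / (5 * γ ^ 2)) := by
  have h₄ := hrec 0
  have h₅ := hrec 1
  have h₆ := hrec 2
  norm_num [hM₀] at h₃ h₄ h₅ h₆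
  have hM₃ : M 3 = (3 * ν * M 2 - 6 * C * T) / (2 * γ) := by
    rw [eq_div_iff (by positivity)]; linear_combination h₃
  have hM₄ : M 4 = (5 * ν * M 3 - 18 * C * M 1 - 12 * D * T) / (3 * γ) := by
    rw [eq_div_iff (by positivity)]; linear_combination h₄
  have hM₅ : M 5 = (7 * ν * M 4 - 30 * C * M 2 - 24 * D * M 1) / (4 * γ) := by
    rw [eq_div_iff (by positivity)]; linear_combination h₅
  have hM₆ : M 6 = (9 * ν * M 5 - 42 * C * M 3 - 36 * D * M 2) / (5 * γ) := by
    rw [eq_div_iff (by positivity)]; linear_combination h₆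
  have hK' : K = (γ / 6 * M 6 - ν / 3 * M 5 + 2 * C * M 3 + 2 * D * M 2) / a := by
    rw [eq_div_iff ha]; linear_combination hK
  rw [hK', hM₆, hM₅, hM₄, hM₃]
  field_simp
  ring

/-- Evaluation of `⟨u²(u')²⟩` (the integral `Ĩ₃`) in terms of `α₁ = ⟨u⟩`,
`α₂ = ⟨u²⟩` and the integration constants of the steady Gardner equation. -/
theorem moment_I3
    (P lam k γ ν C D : ℝ) (hP : 0 < P) (hγ : γ ≠ 0) (hlk : lam * k ^ 2 ≠ 0)
    (u : ℝ → ℝ) (hu : ContDiff ℝ 2 u)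
    (hper : Function.Periodic u (2 * P))
    (heq1 : ∀ θ : ℝ, lam * k ^ 2 * iteratedDeriv 2 u θ
      = (γ / 3) * (u θ) ^ 3 - (ν / 2) * (u θ) ^ 2 + C)
    (heq2 : ∀ θ : ℝ, (lam * k ^ 2 / 2) * (deriv u θ) ^ 2
      = (γ / 12) * (u θ) ^ 4 - (ν / 6) * (u θ) ^ 3 + C * u θ + D)
    (α₁ α₂ : ℝ)
    (hα₁ : α₁ = (1 / (2 * P)) * ∫ θ in (0:ℝ)..(2 * P), u θ)
    (hα₂ : α₂ = (1 / (2 * P)) * ∫ θ in (0:ℝ)..(2 * P), (u θ) ^ 2) :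
    (1 / (2 * P)) * ∫ θ in (0:ℝ)..(2 * P), (u θ) ^ 2 * (deriv u θ) ^ 2
      = (γ / (6 * lam * k ^ 2)) *
          (α₂ * (69 * C * ν / (10 * γ ^ 2) - 7 * ν ^ 4 / (8 * γ ^ 4)
                  + 24 * D / (5 * γ))
           + α₁ * (6 * ν * D / (5 * γ ^ 2) + 21 * ν ^ 2 * C / (10 * γ ^ 3))
           + 35 * ν ^ 3 * C / (20 * γ ^ 4) + 7 * ν ^ 2 * D / (5 * γ ^ 3)
           - 54 * C ^ 2 / (5 * γ ^ 2)) := by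
  have hM₁ : intervalMoment u (2 * P) 1 = ∫ θ in (0:ℝ)..(2 * P), u θ := by
    simp only [intervalMoment, pow_one]
  rw [hα₁, hα₂, ← hM₁, mul_assoc 6]
  exact gardner_mean_sq_mul_deriv_sq_of_moments (by positivity) hγ hlk
    (by simp [intervalMoment]) (gardner_intervalMoment_three hu hper heq1)
    (gardner_intervalMoment_recurrence hu hper heq1 heq2)
    (gardner_integral_sq_mul_deriv_sq heq2 hu.continuous)
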